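/- arXiv:1209.4003 — 5 statements merged into one kernel-verified Lean document; each statement's English description precedes it below -/
import Mathlib

section
/- Let V be a real vector space, S ⊆ (V*)ᵏ a subspace and Λ♯ : S → V a linear map satisfying: (i) ᾱ(Λ♯(ᾱ)) = 0 for all ᾱ ∈ S, and (ii) if ᾱ(Λ♯(β̄)) = 0 for all β̄ ∈ S then Λ♯(ᾱ) = 0. Then the ℝᵏ-valued bilinear form ω̄ on W = Λ♯(S) defined by ω̄(Λ♯(ᾱ), Λ♯(β̄)) = ᾱ(Λ♯(β̄)) is well defined (independent of the chosen preimages), skew-symmetric, and nondegenerate in the sense that if ω̄(u,v) = 0 for all v ∈ W then u = 0. -/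
/-! Condition (i) says that, for each component `A`, the bilinear form `(ᾱ, β̄) ↦ ᾱ_A(Λ♯β̄)` on `S`
is alternating, hence skew-symmetric. Skew-symmetry moves the dependence on `ᾱ` into the
argument `Λ♯ᾱ`, which gives well-definedness; nondegeneracy is condition (ii). -/

section DualPairing

variable {R M N : Type*} [CommRing R] [AddCommMonoid M] [Module R M] [AddCommMonoid N]
  [Module R N] (φ : M →ₗ[R] Module.Dual R N) (Λ : M →ₗ[R] N)

theorem dual_pairing_antisymm (h : ∀ x, φ x (Λ x) = 0) (x y : M) :
    φ x (Λ y) = -φ y (Λ x) :=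
  (LinearMap.IsAlt.neg (B := φ.compl₂ Λ) h y x).symm

theorem dual_pairing_congr (h : ∀ x, φ x (Λ x) = 0) {x x' y y' : M}
    (hx : Λ x = Λ x') (hy : Λ y = Λ y') : φ x (Λ y) = φ x' (Λ y') := by
  rw [← hy, dual_pairing_antisymm φ Λ h x, hx, ← dual_pairing_antisymm φ Λ h x']

end DualPairing

/-- the ℝᵏ-valued bilinear form ω̄(Λ♯ᾱ, Λ♯β̄) := ᾱ(Λ♯β̄) on W = Λ♯(S) is
well defined, skew-symmetric and nondegenerate. -/
theorem stmt_3 (V : Type*) [AddCommGroup V] [Module ℝ V] (k : ℕ)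
    (S : Submodule ℝ (Fin k → Module.Dual ℝ V)) (Λ : S →ₗ[ℝ] V)
    (h1 : ∀ α : S, ∀ A, (α : Fin k → Module.Dual ℝ V) A (Λ α) = 0)
    (h2 : ∀ α : S, (∀ β : S, ∀ A, (α : Fin k → Module.Dual ℝ V) A (Λ β) = 0) → Λ α = 0) :
    -- well definedness: the value ᾱ(Λ♯β̄) only depends on Λ♯ᾱ and Λ♯β̄
    (∀ α α' β β' : S, Λ α = Λ α' → Λ β = Λ β' → ∀ A,
      (α : Fin k → Module.Dual ℝ V) A (Λ β) = (α' : Fin k → Module.Dual ℝ V) A (Λ β')) ∧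
    -- skew-symmetry: ω̄(u,v) = -ω̄(v,u)
    (∀ α β : S, ∀ A, (α : Fin k → Module.Dual ℝ V) A (Λ β)
      = - (β : Fin k → Module.Dual ℝ V) A (Λ α)) ∧
    -- nondegeneracy on W: if ω̄(u,v) = 0 for all v ∈ W then u = 0
    (∀ α : S, (∀ β : S, ∀ A, (α : Fin k → Module.Dual ℝ V) A (Λ β) = 0) → Λ α = 0) := by
  let component (A : Fin k) : S →ₗ[ℝ] Module.Dual ℝ V := LinearMap.proj A ∘ₗ S.subtype
  refine ⟨fun α α' β β' hα hβ A => ?_, fun α β A => ?_, h2⟩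
  · exact dual_pairing_congr (component A) Λ (h1 · A) hα hβ
  · exact dual_pairing_antisymm (component A) Λ (h1 · A) α β
end

section
/- Let (M, ω¹,…,ωᵏ) be a k-polysymplectic manifold and define S = Im(ω̄♭) ⊆ (T¹_k)*M and Λ̄♯ = (ω̄♭)⁻¹|_S : S → TM. Then (S, Λ̄♯) satisfies the three axioms of a k-poly-Poisson structure: (i) ᾱ(Λ̄♯(ᾱ)) = 0 for ᾱ ∈ S; (ii) if ᾱ(Λ̄♯(β̄)) = 0 for all β̄ ∈ S then Λ̄♯(ᾱ) = 0; (iii) [Λ̄♯(ᾱ), Λ̄♯(β̄)] = Λ̄♯(L_{Λ̄♯(ᾱ)}β̄ − L_{Λ̄♯(β̄)}ᾱ − d(β̄(Λ̄♯(ᾱ)))) for sections ᾱ, β̄ of S. -/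
variable {E : Type*} [NormedAddCommGroup E] [NormedSpace ℝ E]

/-- Lie bracket of vector fields on the normed-space model. -/
noncomputable def lieBr (X Y : E → E) : E → E :=
  fun p => fderiv ℝ Y p (X p) - fderiv ℝ X p (Y p)

/-- Pointwise Lie derivative of a 1-form field along a vector field, evaluated on a vector. -/
noncomputable def lieCov (X : E → E) (α : E → (E →L[ℝ] ℝ)) (p v : E) : ℝ :=
  fderiv ℝ (fun q => α q v) p (X p) + α p (fderiv ℝ X p v)

/-- Pointwise exterior derivative of a 2-form field. -/
noncomputable def d2 (Φ : E → (E →L[ℝ] E →L[ℝ] ℝ)) (p x y z : E) : ℝ :=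
  fderiv ℝ (fun q => Φ q y z) p x - fderiv ℝ (fun q => Φ q x z) p y
    + fderiv ℝ (fun q => Φ q x y) p z

/-- Product rule for applying a 2-form field to a vector field and a fixed vector. -/
lemma fd_prod (W : E → (E →L[ℝ] E →L[ℝ] ℝ)) (Y : E → E) (p : E)
    (hW : DifferentiableAt ℝ W p) (hY : DifferentiableAt ℝ Y p) (v w : E) :
    fderiv ℝ (fun q => W q (Y q) v) p w
      = fderiv ℝ W p w (Y p) v + W p (fderiv ℝ Y p w) v := by
  have h1 : fderiv ℝ (fun q => W q (Y q)) p
      = (W p).comp (fderiv ℝ Y p) + (fderiv ℝ W p).flip (Y p) := fderiv_clm_apply hW hY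
  have h2 : fderiv ℝ (fun q => W q (Y q) v) p
      = ((fun q => W q (Y q)) p).comp (fderiv ℝ (fun _ : E => v) p)
        + (fderiv ℝ (fun q => W q (Y q)) p).flip v :=
    fderiv_clm_apply (hW.clm_apply hY) (differentiableAt_const v)
  rw [h2, h1]
  simp [ContinuousLinearMap.add_apply]
  ring

/-- Evaluation form: derivative of pointwise application to fixed vectors. -/
lemma fd_eval (W : E → (E →L[ℝ] E →L[ℝ] ℝ)) (p : E)
    (hW : DifferentiableAt ℝ W p) (u v w : E) :
    fderiv ℝ (fun q => W q u v) p w = fderiv ℝ W p w u v := by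
  have := fd_prod W (fun _ => u) p hW (differentiableAt_const u) v w
  simpa using this

/-- Full product rule for applying a 2-form field to two vector fields. -/
lemma fd_prod2 (W : E → (E →L[ℝ] E →L[ℝ] ℝ)) (X Y : E → E) (p : E)
    (hW : DifferentiableAt ℝ W p) (hX : DifferentiableAt ℝ X p)
    (hY : DifferentiableAt ℝ Y p) (v : E) :
    fderiv ℝ (fun q => W q (Y q) (X q)) p v
      = fderiv ℝ W p v (Y p) (X p) + W p (fderiv ℝ Y p v) (X p)
        + W p (Y p) (fderiv ℝ X p v) := by
  have h1 : fderiv ℝ (fun q => W q (Y q)) p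
      = (W p).comp (fderiv ℝ Y p) + (fderiv ℝ W p).flip (Y p) := fderiv_clm_apply hW hY
  have h2 : fderiv ℝ (fun q => W q (Y q) (X q)) p
      = ((fun q => W q (Y q)) p).comp (fderiv ℝ X p)
        + (fderiv ℝ (fun q => W q (Y q)) p).flip (X p) :=
    fderiv_clm_apply (hW.clm_apply hY) hX
  rw [h2, h1]
  simp [ContinuousLinearMap.add_apply]
  ring

/-- a k-polysymplectic structure (ω¹,…,ωᵏ) induces a k-poly-Poisson
structure with S = Im ω̄♭ and Λ̄♯ = (ω̄♭)⁻¹|_S.  An element of S_p is ω̄♭(X) and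
Λ̄♯(ω̄♭(X)) = X, so the three axioms read:
(i) ω̄♭(X)(X) = 0; (ii) if ω̄♭(X)(Y) = 0 for all Y then X = 0;
(iii) ω̄♭([X,Y]) = L_X(ω̄♭∘Y) − L_Y(ω̄♭∘X) − d((ω̄♭∘Y)(X)) for vector fields X, Y
(which is axiom iii applied to the sections ᾱ = ω̄♭∘X, β̄ = ω̄♭∘Y). -/
theorem stmt_8 (k : ℕ) (ω : Fin k → E → (E →L[ℝ] E →L[ℝ] ℝ))
    (hsm : ∀ A, ContDiff ℝ (⊤ : ℕ∞) (ω A))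
    (hskew : ∀ A (p u v : E), ω A p u v = - ω A p v u)
    (hclosed : ∀ A (p x y z : E), d2 (ω A) p x y z = 0)
    (hnd : ∀ (p u : E), (∀ A (v : E), ω A p u v = 0) → u = 0) :
    -- axiom (i): ᾱ(Λ̄♯ ᾱ) = 0 for ᾱ = ω̄♭(X) ∈ S
    (∀ (p X : E) (A : Fin k), ω A p X X = 0) ∧
    -- axiom (ii): if ᾱ(Λ̄♯ β̄) = 0 for all β̄ = ω̄♭(Y) ∈ S then Λ̄♯ ᾱ = 0
    (∀ (p X : E), (∀ Y : E, ∀ A, ω A p X Y = 0) → X = 0) ∧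
    -- axiom (iii): integrability, with ᾱ = ω̄♭∘X, β̄ = ω̄♭∘Y, Λ̄♯(ᾱ) = X, Λ̄♯(β̄) = Y
    (∀ X Y : E → E, ContDiff ℝ (⊤ : ℕ∞) X → ContDiff ℝ (⊤ : ℕ∞) Y → ∀ (p v : E) (A : Fin k),
      ω A p (lieBr X Y p) v
        = lieCov X (fun q => ω A q (Y q)) p v - lieCov Y (fun q => ω A q (X q)) p v
          - fderiv ℝ (fun q => ω A q (Y q) (X q)) p v) := by
  refine ⟨?_, ?_, ?_⟩
  · intro p X A
    have h := hskew A p X X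
    linarith
  · intro p X h
    exact hnd p X (fun A v => h v A)
  · intro X Y hX hY p v A
    have hW : DifferentiableAt ℝ (ω A) p := (hsm A).differentiable (by simp) p
    have hXd : DifferentiableAt ℝ X p := hX.differentiable (by simp) p
    have hYd : DifferentiableAt ℝ Y p := hY.differentiable (by simp) p
    set W := ω A with hWdef
    set DW := fderiv ℝ W p
    set DX := fderiv ℝ X p
    set DY := fderiv ℝ Y p
    -- unfold the three terms
    have e1 : fderiv ℝ (fun q => W q (Y q) v) p (X p)
        = DW (X p) (Y p) v + W p (DY (X p)) v := fd_prod W Y p hW hYd v (X p)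
    have e2 : fderiv ℝ (fun q => W q (X q) v) p (Y p)
        = DW (Y p) (X p) v + W p (DX (Y p)) v := fd_prod W X p hW hXd v (Y p)
    have e3 : fderiv ℝ (fun q => W q (Y q) (X q)) p v
        = DW v (Y p) (X p) + W p (DY v) (X p) + W p (Y p) (DX v) :=
      fd_prod2 W X Y p hW hXd hYd v
    -- closedness at (X p, Y p, v)
    have hc : DW (X p) (Y p) v - DW (Y p) (X p) v + DW v (X p) (Y p) = 0 := by
      have := hclosed A p (X p) (Y p) v
      unfold d2 at this
      rw [fd_eval W p hW (Y p) v (X p), fd_eval W p hW (X p) v (Y p),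
        fd_eval W p hW (X p) (Y p) v] at this
      exact this
    -- skewness of DW v
    have hsd : DW v (Y p) (X p) = - DW v (X p) (Y p) := by
      have hfun : (fun q => W q (Y p) (X p)) = (fun q => - W q (X p) (Y p)) := by
        funext q; exact hskew A q (Y p) (X p)
      have : fderiv ℝ (fun q => W q (Y p) (X p)) p v
          = - fderiv ℝ (fun q => W q (X p) (Y p)) p v := by
        rw [hfun]
        have hdiff : DifferentiableAt ℝ (fun q => W q (X p) (Y p)) p :=
          (hW.clm_apply (differentiableAt_const _)).clm_apply (differentiableAt_const _)
        rw [fderiv_fun_neg]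
        simp
      rwa [fd_eval W p hW (Y p) (X p) v, fd_eval W p hW (X p) (Y p) v] at this
    -- pointwise skewness of W p
    have hs1 : W p (Y p) (DX v) = - W p (DX v) (Y p) := hskew A p _ _
    have hs2 : W p (X p) (DY v) = - W p (DY v) (X p) := hskew A p _ _
    -- expand the goal
    simp only [lieBr, lieCov, e1, e2, e3]
    have hlin : W p (DY (X p) - DX (Y p)) v
        = W p (DY (X p)) v - W p (DX (Y p)) v := by
      rw [map_sub]; simp
    rw [hlin]
    linarith
end

section
/- Let V be a finite-dimensional real vector space, ω¹,…,ωᵏ skew-symmetric bilinear forms on V with ⋂_A Ker(ωᴬ) = {0}, and D ⊆ V a subspace of dimension r with D ∩ D^⊥ = {0}, where D^⊥ = ⋂_{A=1}^k (ωᴬ)♭⁻¹(D°). Define S = {ᾱ ∈ (V*)ᵏ : ∃ X ∈ D with ᾱ|_D = ω̄♭(X)|_D}. Then the restriction map D → (D*)ᵏ, X ↦ ω̄♭(X)|_D, is injective, and dim S = r + (dim V − r)·k. -/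
/-! `S` is the preimage, under the surjective componentwise restriction `(V*)ᵏ → (D*)ᵏ`, of the
image of the map `X ↦ ω̄♭(X)|_D`, which is injective because `D ∩ D^⊥ = 0`. Hence
`dim S = r + dim ker`, and the kernel, `(D°)ᵏ`, has dimension `(dim V - r) k`. -/

open Module

theorem Submodule.finrank_comap_of_surjective {K V W : Type*} [DivisionRing K]
    [AddCommGroup V] [Module K V] [FiniteDimensional K V] [AddCommGroup W] [Module K W]
    {f : V →ₗ[K] W} (hf : Function.Surjective f) (P : Submodule K W) :
    finrank K (P.comap f) = finrank K P + finrank K (LinearMap.ker f) := by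
  have h := (f.domRestrict (P.comap f)).finrank_range_add_finrank_ker
  rw [LinearMap.range_domRestrict, map_comap_eq_of_surjective hf, LinearMap.ker_domRestrict,
    (comapSubtypeEquivOfLe (LinearMap.ker_le_comap f)).finrank_eq] at h
  exact h.symm

theorem finrank_pi_dual {K V ι : Type*} [Field K] [AddCommGroup V] [Module K V]
    [FiniteDimensional K V] [Fintype ι] :
    finrank K (ι → Dual K V) = finrank K V * Fintype.card ι := by
  simp [Module.finrank_pi_fintype, Subspace.dual_finrank_eq, mul_comm]

section DiracType

variable {K V ι : Type*} [Field K] [AddCommGroup V] [Module K V]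
  (ω : ι → LinearMap.BilinForm K V) (D : Submodule K V)

def flatRestrict : D →ₗ[K] (ι → Dual K D) :=
  LinearMap.pi fun A => D.dualRestrict ∘ₗ ω A ∘ₗ D.subtype

@[simp]
theorem flatRestrict_apply (X : D) (A : ι) (d : D) : flatRestrict ω D X A d = ω A X d :=
  rfl

variable {ω D}

theorem flatRestrict_injective (hD : ∀ v ∈ D, (∀ A, ∀ d ∈ D, ω A v d = 0) → v = 0) :
    Function.Injective (flatRestrict ω D) := by
  rw [← LinearMap.ker_eq_bot, Submodule.eq_bot_iff]
  intro X hX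
  refine Subtype.ext (hD X X.2 fun A d hd => ?_)
  simpa using congr($hX A ⟨d, hd⟩)

variable (ω D)

theorem setOf_restrict_eq_comap_range_flatRestrict :
    {α : ι → Dual K V | ∃ X ∈ D, ∀ A, ∀ d ∈ D, α A d = ω A X d}
      = (LinearMap.range (flatRestrict ω D)).comap (LinearMap.piMap fun _ => D.dualRestrict) := by
  ext α
  simp only [Set.mem_ofPred_eq, SetLike.mem_coe, Submodule.mem_comap, LinearMap.mem_range,
    funext_iff, LinearMap.ext_iff, Subtype.forall, flatRestrict_apply, LinearMap.coe_piMap,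
    Pi.map_apply, Submodule.dualRestrict_apply, Subtype.exists, exists_prop]
  exact exists_congr fun X => and_congr_right fun _ => forall_congr' fun A =>
    forall₂_congr fun d _ => eq_comm

end DiracType

theorem stmt_12_general (V : Type*) [AddCommGroup V] [Module ℝ V] [FiniteDimensional ℝ V]
    (k r : ℕ) (ω : Fin k → LinearMap.BilinForm ℝ V)
    (D : Submodule ℝ V) (hr : Module.finrank ℝ D = r)
    -- D ∩ D^⊥ = {0}, with D^⊥ = ⋂_A (ωᴬ♭)⁻¹(D°)
    (hD : ∀ v ∈ D, (∀ A, ∀ d ∈ D, ω A v d = 0) → v = 0) :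
    (∀ X ∈ D, ∀ Y ∈ D, (∀ A, ∀ d ∈ D, ω A X d = ω A Y d) → X = Y) ∧
    Set.finrank ℝ
        {α : Fin k → Module.Dual ℝ V | ∃ X ∈ D, ∀ A, ∀ d ∈ D, α A d = ω A X d}
      = r + (Module.finrank ℝ V - r) * k := by
  refine ⟨fun X hX Y hY h =>
    sub_eq_zero.mp (hD _ (D.sub_mem hX hY) fun A d hd => by simp [h A d hd]), ?_⟩
  set Φ := LinearMap.piMap fun _ : Fin k => D.dualRestrict
  have hΦ : Function.Surjective Φ :=
    Function.Surjective.piMap fun _ => Subspace.dualRestrict_surjective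
  have hkerΦ : finrank ℝ (LinearMap.ker Φ) = (finrank ℝ V - r) * k := by
    have h := Φ.finrank_range_add_finrank_ker
    rw [LinearMap.range_eq_top.mpr hΦ, finrank_top, finrank_pi_dual, finrank_pi_dual, hr,
      Fintype.card_fin] at h
    rw [Nat.sub_mul]
    omega
  rw [Set.finrank, setOf_restrict_eq_comap_range_flatRestrict, Submodule.span_eq,
    Submodule.finrank_comap_of_surjective hΦ,
    LinearMap.finrank_range_of_inj (flatRestrict_injective hD), hr, hkerΦ]

/-- in the Dirac-type construction, the map D → (D*)ᵏ, X ↦ ω̄♭(X)|_D is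
injective, and the subspace S = {ᾱ : ᾱ|_D = ω̄♭(X)|_D for some X ∈ D} has dimension
r + (dim V − r)·k. -/
theorem stmt_12 (V : Type*) [AddCommGroup V] [Module ℝ V] [FiniteDimensional ℝ V]
    (k r : ℕ) (ω : Fin k → LinearMap.BilinForm ℝ V)
    (hskew : ∀ A (x y : V), ω A x y = - ω A y x)
    (hnd : ∀ x : V, (∀ A (y : V), ω A x y = 0) → x = 0)
    (D : Submodule ℝ V) (hr : Module.finrank ℝ D = r)
    -- D ∩ D^⊥ = {0}, with D^⊥ = ⋂_A (ωᴬ♭)⁻¹(D°)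
    (hD : ∀ v ∈ D, (∀ A, ∀ d ∈ D, ω A v d = 0) → v = 0) :
    (∀ X ∈ D, ∀ Y ∈ D, (∀ A, ∀ d ∈ D, ω A X d = ω A Y d) → X = Y) ∧
    Set.finrank ℝ
        {α : Fin k → Module.Dual ℝ V | ∃ X ∈ D, ∀ A, ∀ d ∈ D, α A d = ω A X d}
      = r + (Module.finrank ℝ V - r) * k :=
  stmt_12_general V k r ω D hr hD
end

section
/- In the setting of poly-Poisson structures of Dirac type: let V be finite-dimensional with skew forms ω¹,…,ωᵏ satisfying ⋂_A Ker ωᴬ = {0}, D ⊆ V with D ∩ D^⊥ = {0} (D^⊥ = ⋂_A (ωᴬ♭)⁻¹(D°)), and S = {ᾱ ∈ (V*)ᵏ : ∃X ∈ D, ᾱ|_D = ω̄♭(X)|_D}. Define Λ̄♯ : S → V by Λ̄♯(ᾱ) = X where X ∈ D and ω̄♭(X)|_D = ᾱ|_D. Then Λ̄♯ is well defined (if X, Y ∈ D with ω̄♭(X)|_D = ω̄♭(Y)|_D then X = Y), satisfies ᾱ(Λ̄♯(ᾱ)) = 0 for all ᾱ ∈ S, and if ᾱ ∈ S satisfies ᾱ(Λ̄♯(β̄))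 = 0 for all β̄ ∈ S then Λ̄♯(ᾱ) = 0. -/
namespace PolyDirac

variable {R V ι : Type*} [CommRing R] [AddCommGroup V] [Module R V]
  {ω : ι → LinearMap.BilinForm R V} {D : Submodule R V}

/-- The set `S` on which `Λ̄♯` is defined. -/
def domain (ω : ι → LinearMap.BilinForm R V) (D : Submodule R V) :
    Set (ι → Module.Dual R V) :=
  {α | ∃ X ∈ D, ∀ A, ∀ d ∈ D, α A d = ω A X d}

theorem flat_mem_domain {X : V} (hX : X ∈ D) : (fun A => ω A X) ∈ domain ω D :=
  ⟨X, hX, fun _ _ _ => rfl⟩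

theorem eq_of_forall_apply_eq
    (hD : ∀ v ∈ D, (∀ A, ∀ d ∈ D, ω A v d = 0) → v = 0)
    {X Y : V} (hX : X ∈ D) (hY : Y ∈ D) (h : ∀ A, ∀ d ∈ D, ω A X d = ω A Y d) : X = Y :=
  sub_eq_zero.mp <| hD _ (D.sub_mem hX hY) fun A d hd => by
    rw [map_sub, LinearMap.sub_apply, h A d hd, sub_self]

/-- `Λ` is a choice of `Λ̄♯ : S → V`. -/
def IsSharp (ω : ι → LinearMap.BilinForm R V) (D : Submodule R V)
    (Λ : (ι → Module.Dual R V) → V) : Prop :=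
  ∀ α ∈ domain ω D, Λ α ∈ D ∧ ∀ A, ∀ d ∈ D, α A d = ω A (Λ α) d

variable {Λ : (ι → Module.Dual R V) → V}

theorem image_domain_eq (hΛ : IsSharp ω D Λ)
    (hD : ∀ v ∈ D, (∀ A, ∀ d ∈ D, ω A v d = 0) → v = 0) :
    Λ '' domain ω D = D := by
  refine Set.Subset.antisymm (Set.image_subset_iff.mpr fun α hα => (hΛ α hα).1) ?_
  intro X hX
  have hflat := flat_mem_domain (ω := ω) hX
  exact ⟨_, hflat, eq_of_forall_apply_eq hD (hΛ _ hflat).1 hX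
    fun A d hd => ((hΛ _ hflat).2 A d hd).symm⟩

theorem apply_sharp_self [NoZeroDivisors R] [CharZero R] (hΛ : IsSharp ω D Λ)
    (hskew : ∀ A (x y : V), ω A x y = - ω A y x) {α : ι → Module.Dual R V}
    (hα : α ∈ domain ω D) (A : ι) : α A (Λ α) = 0 := by
  obtain ⟨hΛα, hαΛ⟩ := hΛ α hα
  rw [hαΛ A _ hΛα]
  exact CharZero.eq_neg_self_iff.mp (hskew A _ _)

theorem sharp_eq_zero_of_forall_apply_sharp_eq_zero (hΛ : IsSharp ω D Λ)
    (hD : ∀ v ∈ D, (∀ A, ∀ d ∈ D, ω A v d = 0) → v = 0) {α : ι → Module.Dual R V}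
    (hα : α ∈ domain ω D) (h : ∀ β ∈ domain ω D, ∀ A, α A (Λ β) = 0) : Λ α = 0 := by
  obtain ⟨hΛα, hαΛ⟩ := hΛ α hα
  refine hD _ hΛα fun A d hd => ?_
  obtain ⟨β, hβ, rfl⟩ : d ∈ Λ '' domain ω D := (image_domain_eq hΛ hD).symm ▸ hd
  rw [← hαΛ A _ (hΛ β hβ).1]
  exact h β hβ A

end PolyDirac

open PolyDirac in
theorem stmt_13_general (V : Type*) [AddCommGroup V] [Module ℝ V]
    (k : ℕ) (ω : Fin k → LinearMap.BilinForm ℝ V)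
    (hskew : ∀ A (x y : V), ω A x y = - ω A y x)
    (D : Submodule ℝ V)
    -- D ∩ D^⊥ = {0}, with D^⊥ = ⋂_A (ωᴬ♭)⁻¹(D°)
    (hD : ∀ v ∈ D, (∀ A, ∀ d ∈ D, ω A v d = 0) → v = 0)
    (S : Set (Fin k → Module.Dual ℝ V))
    (hS : S = {α | ∃ X ∈ D, ∀ A, ∀ d ∈ D, α A d = ω A X d})
    (Λ : (Fin k → Module.Dual ℝ V) → V)
    (hΛ : ∀ α ∈ S, Λ α ∈ D ∧ ∀ A, ∀ d ∈ D, α A d = ω A (Λ α) d) :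
    -- well definedness
    (∀ X ∈ D, ∀ Y ∈ D, (∀ A, ∀ d ∈ D, ω A X d = ω A Y d) → X = Y) ∧
    -- axiom (i)
    (∀ α ∈ S, ∀ A, α A (Λ α) = 0) ∧
    -- axiom (ii)
    (∀ α ∈ S, (∀ β ∈ S, ∀ A, α A (Λ β) = 0) → Λ α = 0) ∧
    -- Im Λ̄♯ = D
    (Λ '' S = (D : Set V)) := by
  change S = domain ω D at hS
  subst hS
  exact ⟨fun X hX Y hY => eq_of_forall_apply_eq hD hX hY,
    fun α hα => apply_sharp_self hΛ hskew hα,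
    fun α hα => sharp_eq_zero_of_forall_apply_sharp_eq_zero hΛ hD hα,
    image_domain_eq hΛ hD⟩

/-- poly-Poisson structures of Dirac type.  The map Λ̄♯ : S → V,
ᾱ ↦ X where X ∈ D and ω̄♭(X)|_D = ᾱ|_D, is well defined, satisfies ᾱ(Λ̄♯ᾱ) = 0,
satisfies the nondegeneracy axiom, and has image D. -/
theorem stmt_13 (V : Type*) [AddCommGroup V] [Module ℝ V] [FiniteDimensional ℝ V]
    (k : ℕ) (ω : Fin k → LinearMap.BilinForm ℝ V)
    (hskew : ∀ A (x y : V), ω A x y = - ω A y x)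
    (hnd : ∀ x : V, (∀ A (y : V), ω A x y = 0) → x = 0)
    (D : Submodule ℝ V)
    -- D ∩ D^⊥ = {0}, with D^⊥ = ⋂_A (ωᴬ♭)⁻¹(D°)
    (hD : ∀ v ∈ D, (∀ A, ∀ d ∈ D, ω A v d = 0) → v = 0)
    (S : Set (Fin k → Module.Dual ℝ V))
    (hS : S = {α | ∃ X ∈ D, ∀ A, ∀ d ∈ D, α A d = ω A X d})
    (Λ : (Fin k → Module.Dual ℝ V) → V)
    (hΛ : ∀ α ∈ S, Λ α ∈ D ∧ ∀ A, ∀ d ∈ D, α A d = ω A (Λ α) d) :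
    -- well definedness
    (∀ X ∈ D, ∀ Y ∈ D, (∀ A, ∀ d ∈ D, ω A X d = ω A Y d) → X = Y) ∧
    -- axiom (i)
    (∀ α ∈ S, ∀ A, α A (Λ α) = 0) ∧
    -- axiom (ii)
    (∀ α ∈ S, (∀ β ∈ S, ∀ A, α A (Λ β) = 0) → Λ α = 0) ∧
    -- Im Λ̄♯ = D
    (Λ '' S = (D : Set V)) :=
  stmt_13_general V k ω hskew D hD S hS Λ hΛ
end

section
/- Let V, W be real vector spaces, π : V → W a surjective linear map with kernel K, and ω¹,…,ωᵏ skew-symmetric bilinear forms on V. Let S ⊆ (V*)ᵏ be a subspace invariant in the sense of the reduction setup, and suppose the pointwise reduction hypotheses hold: (i) Im(ω̄♭) ∩ (K°)ᵏ is a subspace, and (ii) (ω̄♭)⁻¹((K^⊥)°ᵏ ∩ (K°)ᵏ ∩ Im(ω̄♭)) ⊆ K, where K^⊥ = ⋂_A (ωᴬ♭)⁻¹(K°). Define Ŝ = {ᾱ ∈ (W*)ᵏ : (π*)ᵏ(ᾱ) ∈ Im(ω̄♭)} and Λ̂♯(ᾱ) = π((ω̄♭)⁻¹((π*)ᵏ(ᾱ)))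 for ᾱ ∈ Ŝ (assuming ω̄♭ is injective). Then Λ̂♯ is well defined, ᾱ(Λ̂♯(ᾱ)) = 0 for all ᾱ ∈ Ŝ, and if ᾱ ∈ Ŝ satisfies ᾱ(Λ̂♯(β̄)) = 0 for all β̄ ∈ Ŝ then Λ̂♯(ᾱ) = 0. -/
/-!
Injectivity of `ω̄♭` makes `Λ̂♯` well defined. Axiom (i) is `αᴬ(π v) = ωᴬ(v, v) = 0` by skew-symmetry.
For axiom (ii), `(π*)ᵏ ᾱ = ω̄♭ v` already lies in `(K°)ᵏ`, so by hypothesis (ii) it suffices that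
`ω̄♭ v` kills `K^⊥`. Over a field `Im π* = K°`, so for `u ∈ K^⊥` we get `ω̄♭ u = (π*)ᵏ β̄` for some
`β̄ ∈ Ŝ` with `Λ̂♯ β̄ = π u`, and then `ωᴬ(v, u) = αᴬ(π u) = 0`.
-/

open Module

theorem LinearMap.BilinForm.apply_self_eq_zero_of_antisymm {R V : Type*} [CommRing R]
    [NoZeroDivisors R] [CharZero R] [AddCommGroup V] [Module R V] {ω : LinearMap.BilinForm R V} (hskew : ∀ x y, ω x y = -ω y x) (x : V) :
    ω x x = 0 :=
  (LinearMap.isAlt_iff_eq_neg_flip.mpr (LinearMap.ext₂ hskew)).self_eq_zero x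

theorem LinearMap.exists_comp_eq_of_mem_dualAnnihilator_ker {K V W : Type*} [Field K]
    [AddCommGroup V] [Module K V] [AddCommGroup W] [Module K W] (π : V →ₗ[K] W) {f : Dual K V}
    (hf : f ∈ (LinearMap.ker π).dualAnnihilator) : ∃ g : Dual K W, g.comp π = f := by
  rw [← LinearMap.range_dualMap_eq_dualAnnihilator_ker] at hf
  obtain ⟨g, rfl⟩ := hf
  exact ⟨g, (π.dualMap_apply' g).symm⟩

theorem stmt_17_general (V W : Type*) [AddCommGroup V] [Module ℝ V]
    [AddCommGroup W] [Module ℝ W]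
    (π : V →ₗ[ℝ] W) (k : ℕ)
    (ω : Fin k → LinearMap.BilinForm ℝ V)
    (hskew : ∀ A (x y : V), ω A x y = - ω A y x)
    -- ω̄♭ is injective
    (hinj : ∀ v v' : V, (∀ A, ω A v = ω A v') → v = v')
    -- hypothesis (ii): (ω̄♭)⁻¹((K^⊥)°ᵏ ∩ (K°)ᵏ ∩ Im ω̄♭) ⊆ K
    (hii : ∀ v : V,
      (∀ A, ∀ x : V, π x = 0 → ω A v x = 0) →
      (∀ A, ∀ u : V, (∀ B, ∀ x : V, π x = 0 → ω B u x = 0) → ω A v u = 0) →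
      π v = 0) :
    -- Λ̂♯ is well defined
    (∀ v v' : V, (∀ A, ω A v = ω A v') → π v = π v') ∧
    -- axiom (i): ᾱ(Λ̂♯ᾱ) = 0 for ᾱ ∈ Ŝ with (π*)ᵏᾱ = ω̄♭(v)
    (∀ (α : Fin k → Module.Dual ℝ W) (v : V),
      (∀ A, (α A).comp π = ω A v) → ∀ A, α A (π v) = 0) ∧
    -- axiom (ii): if ᾱ(Λ̂♯β̄) = 0 for every β̄ ∈ Ŝ then Λ̂♯ᾱ = 0
    (∀ (α : Fin k → Module.Dual ℝ W) (v : V),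
      (∀ A, (α A).comp π = ω A v) →
      (∀ (β : Fin k → Module.Dual ℝ W) (w : V),
        (∀ A, (β A).comp π = ω A w) → ∀ A, α A (π w) = 0) →
      π v = 0) := by
  have hcomp_apply {α : Fin k → Dual ℝ W} {v : V} (hα : ∀ A, (α A).comp π = ω A v) (A : Fin k)
      (x : V) : α A (π x) = ω A v x :=
    LinearMap.congr_fun (hα A) x
  refine ⟨fun v v' h => congrArg π (hinj v v' h), ?_, ?_⟩
  · intro α v hα A
    rw [hcomp_apply hα, LinearMap.BilinForm.apply_self_eq_zero_of_antisymm (hskew A)]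
  · intro α v hα hΛ
    refine hii v (fun A x hx => by rw [← hcomp_apply hα, hx, map_zero]) fun A u hu => ?_
    choose β hβ using fun B =>
      π.exists_comp_eq_of_mem_dualAnnihilator_ker ((Submodule.mem_dualAnnihilator _).mpr (hu B))
    rw [← hcomp_apply hα]
    exact hΛ β u hβ A

/-- pointwise content of polysymplectic reduction, Theorem 4.1:
with π : V → W surjective, K = Ker π, ω̄♭ injective, and hypothesis (ii)
(ω̄♭)⁻¹((K^⊥)°ᵏ ∩ (K°)ᵏ ∩ Im ω̄♭) ⊆ K, the reduced map
Λ̂♯(ᾱ) = π((ω̄♭)⁻¹((π*)ᵏᾱ)) on Ŝ = {ᾱ : (π*)ᵏᾱ ∈ Im ω̄♭} is well defined and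
satisfies axioms (i) and (ii) of a poly-Poisson structure. -/
theorem stmt_17 (V W : Type*) [AddCommGroup V] [Module ℝ V] [FiniteDimensional ℝ V]
    [AddCommGroup W] [Module ℝ W] [FiniteDimensional ℝ W]
    (π : V →ₗ[ℝ] W) (hπ : Function.Surjective π) (k : ℕ)
    (ω : Fin k → LinearMap.BilinForm ℝ V)
    (hskew : ∀ A (x y : V), ω A x y = - ω A y x)
    -- ω̄♭ is injective
    (hinj : ∀ v v' : V, (∀ A, ω A v = ω A v') → v = v')
    -- hypothesis (ii): (ω̄♭)⁻¹((K^⊥)°ᵏ ∩ (K°)ᵏ ∩ Im ω̄♭) ⊆ K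
    (hii : ∀ v : V,
      (∀ A, ∀ x : V, π x = 0 → ω A v x = 0) →
      (∀ A, ∀ u : V, (∀ B, ∀ x : V, π x = 0 → ω B u x = 0) → ω A v u = 0) →
      π v = 0) :
    -- Λ̂♯ is well defined
    (∀ v v' : V, (∀ A, ω A v = ω A v') → π v = π v') ∧
    -- axiom (i): ᾱ(Λ̂♯ᾱ) = 0 for ᾱ ∈ Ŝ with (π*)ᵏᾱ = ω̄♭(v)
    (∀ (α : Fin k → Module.Dual ℝ W) (v : V),
      (∀ A, (α A).comp π = ω A v) → ∀ A, α A (π v) = 0) ∧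
    -- axiom (ii): if ᾱ(Λ̂♯β̄) = 0 for every β̄ ∈ Ŝ then Λ̂♯ᾱ = 0
    (∀ (α : Fin k → Module.Dual ℝ W) (v : V),
      (∀ A, (α A).comp π = ω A v) →
      (∀ (β : Fin k → Module.Dual ℝ W) (w : V),
        (∀ A, (β A).comp π = ω A w) → ∀ A, α A (π w) = 0) →
      π v = 0) :=
  stmt_17_general V W π k ω hskew hinj hii
end
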